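/- arXiv:1912.04503 — 6 statements merged into one kernel-verified Lean document; each statement's English description precedes it below -/
import Mathlib

section
/- For all integers n ≥ 1 and d ≥ 2, the first half of the Hodge numbers is nondecreasing: h_j ≤ h_{j'} whenever 1 ≤ j ≤ j' ≤ ⌊nd/2⌋. -/
/-!
Splitting off the first coordinate writes `h^{(n+1)}_j` as the window sum of `h^{(n)}` over
`[j - d + 1, j - 1]`, so `h^{(n+1)}_{j+1} - h^{(n+1)}_j = h^{(n)}_j - h^{(n)}_{j-d+1}`.
The reflection `u ↦ d - u` makes `h^{(n)}` symmetric about `nd/2`. By induction on `n`,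
`h^{(n)}` increases up to `nd/2`, and for `j + 1 ≤ (n+1)d/2` the right-hand side is
nonnegative: directly if `j ≤ nd/2`, and otherwise after replacing `j` by its mirror
image `nd - j`, which lies between `j - d + 1` and `nd/2`.
-/

/-- The Hodge number `h_j` of the simplex `Simp(n,d)`: the number of points
`u ∈ ℤ^n` with `0 < u i < d` for all `i` and `∑ i, u i = j`. -/
noncomputable def hodge (n d : ℕ) (j : ℤ) : ℕ :=
  ((Fintype.piFinset fun _ : Fin n => Finset.Icc (1 : ℤ) ((d : ℤ) - 1)).filter
    fun u => ∑ i, u i = j).card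

open Finset

lemma hodge_zero_of_ne_zero (d : ℕ) {j : ℤ} (hj : j ≠ 0) : hodge 0 d j = 0 := by
  simp [hodge, hj.symm]

lemma hodge_eq_hodge_mul_sub (n d : ℕ) (j : ℤ) : hodge n d j = hodge n d (n * d - j) := by
  refine card_nbij' (fun u i => d - u i) (fun u i => d - u i) ?_ ?_
    (fun _ _ => by simp) (fun _ _ => by simp) <;>
  · intro u hu
    simp only [coe_filter, Set.mem_ofPred_eq, Fintype.mem_piFinset, mem_Icc] at hu ⊢
    refine ⟨fun i => ?_, ?_⟩
    · have := hu.1 i; omega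
    · simp [sum_sub_distrib, hu.2]

lemma hodge_succ (n d : ℕ) (j : ℤ) :
    hodge (n + 1) d j = ∑ w ∈ Icc (j - d + 1) (j - 1), hodge n d w := by
  rw [hodge, card_eq_sum_card_fiberwise (f := fun u => j - u 0) (t := Icc (j - d + 1) (j - 1))
    fun u hu => by
      have := Fintype.mem_piFinset.1 (mem_filter.1 hu).1 0
      simp only [coe_Icc, Set.mem_Icc, mem_Icc] at this ⊢
      omega]
  refine sum_congr rfl fun w _ => ?_
  refine card_nbij' Fin.tail (fun u => Fin.cons (j - w) u) ?_ ?_ ?_ ?_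
  · intro u hu
    simp only [mem_coe, mem_filter, Fin.mem_piFinset_iff_zero_tail, Fin.sum_univ_succ] at hu ⊢
    obtain ⟨⟨⟨-, hu⟩, hsum⟩, hw⟩ := hu
    exact ⟨hu, by simp [Fin.tail]; omega⟩
  · intro u hu
    simp only [mem_coe, mem_filter, Fin.mem_piFinset_iff_zero_tail, Fin.sum_univ_succ] at hu ⊢
    simp_all [Fin.tail]
    omega
  · intro u hu
    simp only [mem_coe, mem_filter] at hu
    simp [← hu.2]
  · intro u _
    simp

lemma hodge_succ_add_one_add (n : ℕ) {d : ℕ} (hd : 0 < d) (j : ℤ) :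
    hodge (n + 1) d (j + 1) + hodge n d (j - d + 1) = hodge (n + 1) d j + hodge n d j := by
  have hleft : insert (j - d + 1) (Icc (j + 1 - d + 1) (j + 1 - 1)) = Icc (j - d + 1) j := by
    rw [show j + 1 - d + 1 = j - d + 1 + 1 by ring, add_sub_cancel_right]
    exact insert_Icc_add_one_left_eq_Icc (by omega)
  have hright : insert j (Icc (j - d + 1) (j - 1)) = Icc (j - d + 1) j :=
    insert_Icc_sub_one_right_eq_Icc (by omega)
  rw [hodge_succ, hodge_succ, add_comm, ← sum_insert (by simp), hleft, ← hright,
    sum_insert (by simp), add_comm]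

lemma hodge_monotoneOn {d : ℕ} (hd : 0 < d) (n : ℕ) :
    MonotoneOn (hodge n d) (Set.Iic ((n : ℤ) * d / 2)) := by
  induction n with
  | zero =>
    refine monotoneOn_of_le_add_one Set.ordConnected_Iic fun j _ _ hj => ?_
    rw [hodge_zero_of_ne_zero d (by simp at hj; omega)]
    exact Nat.zero_le _
  | succ n ih =>
    refine monotoneOn_of_le_add_one Set.ordConnected_Iic fun j _ _ hj => ?_
    have hnd : ((n + 1 : ℕ) : ℤ) * d = n * d + d := by push_cast; ring
    rw [Set.mem_Iic, hnd] at hj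
    suffices hodge n d (j - d + 1) ≤ hodge n d j by
      have := hodge_succ_add_one_add n hd j
      omega
    by_cases hjn : j ≤ n * d / 2
    · exact ih (Set.mem_Iic.2 (by omega)) hjn (by omega)
    · rw [hodge_eq_hodge_mul_sub n d j]
      exact ih (Set.mem_Iic.2 (by omega)) (Set.mem_Iic.2 (by omega)) (by omega)

theorem hodge_mono_general (n d : ℕ) (hd : 2 ≤ d) (j j' : ℤ)
    (h2 : j ≤ j') (h3 : j' ≤ (n : ℤ) * d / 2) :
    hodge n d j ≤ hodge n d j' :=
  hodge_monotoneOn (by omega) n (Set.mem_Iic.2 (h2.trans h3)) h3 h2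

/-- The first half of the Hodge numbers is nondecreasing:
`h_j ≤ h_{j'}` whenever `1 ≤ j ≤ j' ≤ ⌊nd/2⌋`. -/
theorem hodge_mono (n d : ℕ) (hn : 1 ≤ n) (hd : 2 ≤ d) (j j' : ℤ)
    (h1 : 1 ≤ j) (h2 : j ≤ j') (h3 : j' ≤ (n : ℤ) * d / 2) :
    hodge n d j ≤ hodge n d j' :=
  hodge_mono_general n d hd j j' h2 h3
end

section
/- For all integers n ≥ 1, d ≥ 2 and every integer i with 0 ≤ i ≤ nd and i ≢ 0 (mod d), the arithmetic Hodge sums satisfy H_i + H_{nd−i−d} = ((d−1)^n − (−1)^n)/d. -/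
/-- The arithmetic Hodge sum `H_i := Σ_{j=0}^{⌊i/d⌋} h_{i−jd}`, with `H_i = 0` for `i < 0`. -/
noncomputable def Hsum (n d : ℕ) (i : ℤ) : ℤ :=
  if i < 0 then 0
  else ∑ j ∈ Finset.range ((i / d).toNat + 1), (hodge n d (i - (j : ℤ) * d) : ℤ)

/-!
`H_i` counts the points `u ∈ {1,…,d-1}^n` with `∑ u ≤ i` and `∑ u ≡ i (mod d)`. The reflection
`u ↦ d - u` turns `H_{nd-i-d}` into the count of those with `∑ u ≥ i + d` and `∑ u ≡ i`, so the two
sums together count every point with `∑ u ≡ i (mod d)`. Peeling off one coordinate shows that this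
count `N_n(i)` satisfies `d · N_n(i) = (d-1)^n - (-1)^n + [d ∣ i] · d · (-1)^n`.
-/

open Finset

noncomputable def hodgeBox (n d : ℕ) : Finset (Fin n → ℤ) :=
  Fintype.piFinset fun _ => Icc 1 ((d : ℤ) - 1)

section HodgeBox

variable {n d : ℕ}

lemma mem_hodgeBox {u : Fin n → ℤ} : u ∈ hodgeBox n d ↔ ∀ k, 1 ≤ u k ∧ u k < d := by
  simp [hodgeBox]

lemma sum_nonneg_of_mem_hodgeBox {u : Fin n → ℤ} (hu : u ∈ hodgeBox n d) : 0 ≤ ∑ k, u k :=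
  sum_nonneg fun k _ => by linarith [(mem_hodgeBox.mp hu k).1]

lemma card_hodgeBox_filter_sum_reflect (p : ℤ → Prop) [DecidablePred p] :
    #{u ∈ hodgeBox n d | p (∑ k, u k)} = #{u ∈ hodgeBox n d | p (n * d - ∑ k, u k)} := by
  have hsum (u : Fin n → ℤ) : ∑ k, ((d : ℤ) - u k) = n * d - ∑ k, u k := by
    simp [sum_sub_distrib]
  have hbox {u : Fin n → ℤ} (hu : u ∈ hodgeBox n d) : (fun k => (d : ℤ) - u k) ∈ hodgeBox n d :=
    mem_hodgeBox.mpr fun k => by have := mem_hodgeBox.mp hu k; constructor <;> linarith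
  refine card_nbij' (fun u k => d - u k) (fun u k => d - u k) ?_ ?_ ?_ ?_
  · intro u hu
    simp only [coe_filter, Set.mem_ofPred_eq] at hu ⊢
    exact ⟨hbox hu.1, by rw [hsum, sub_sub_cancel]; exact hu.2⟩
  · intro u hu
    simp only [coe_filter, Set.mem_ofPred_eq] at hu ⊢
    exact ⟨hbox hu.1, by rw [hsum]; exact hu.2⟩
  · intro u _; simp
  · intro u _; simp

lemma card_hodgeBox_succ_filter (p : ℤ → Prop) [DecidablePred p] :
    #{u ∈ hodgeBox (n + 1) d | p (∑ k, u k)} =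
      ∑ c ∈ Icc 1 ((d : ℤ) - 1), #{v ∈ hodgeBox n d | p (c + ∑ k, v k)} := by
  rw [← card_sigma]
  refine card_nbij' (fun u => ⟨u 0, Fin.tail u⟩) (fun x => Fin.cons x.1 x.2) ?_ ?_ ?_ ?_
  · intro u hu
    simp_all [mem_hodgeBox, Fin.forall_fin_succ, Fin.sum_univ_succ, Fin.tail]
  · intro x hx
    simp_all [mem_hodgeBox, Fin.forall_fin_succ, Fin.sum_univ_succ]
  · intro u _; simp
  · intro u _; simp

end HodgeBox

lemma card_Icc_filter_dvd_sub {d : ℤ} (hd : 0 < d) (i : ℤ) :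
    #{c ∈ Icc 1 (d - 1) | d ∣ i - c} = if d ∣ i then 0 else 1 := by
  split_ifs with hi
  · refine card_eq_zero.mpr (filter_eq_empty_iff.mpr fun c hc hic => ?_)
    rw [mem_Icc] at hc
    have : d ≤ c := Int.le_of_dvd (by omega) ((dvd_sub_right hi).mp hic)
    omega
  · refine card_eq_one.mpr ⟨i % d, eq_singleton_iff_unique_mem.mpr ⟨?_, fun c hc => ?_⟩⟩
    · have h0 : i % d ≠ 0 := fun h => hi (Int.dvd_of_emod_eq_zero h)
      have := Int.emod_nonneg i hd.ne'
      have := Int.emod_lt_of_pos i hd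
      refine mem_filter.mpr ⟨mem_Icc.mpr ⟨by omega, by omega⟩, ?_⟩
      exact Int.modEq_iff_dvd.mp (Int.mod_modEq i d)
    · obtain ⟨hc, hic⟩ := mem_filter.mp hc
      rw [mem_Icc] at hc
      rw [← Int.emod_eq_of_lt (by omega : 0 ≤ c) (by omega : c < d)]
      exact Int.modEq_iff_dvd.mpr hic

lemma mul_card_hodgeBox_filter_dvd_sub {d : ℕ} (hd : 0 < d) (n : ℕ) (i : ℤ) :
    d * (#{u ∈ hodgeBox n d | (d : ℤ) ∣ i - ∑ k, u k} : ℤ) =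
      (d - 1) ^ n - (-1) ^ n + if (d : ℤ) ∣ i then (d : ℤ) * (-1) ^ n else 0 := by
  induction n generalizing i with
  | zero =>
    by_cases hi : (d : ℤ) ∣ i <;> simp [hodgeBox, hi]
  | succ n ih =>
    have hd' : (0 : ℤ) < d := by exact_mod_cast hd
    have hIcc : (#(Icc 1 ((d : ℤ) - 1)) : ℤ) = d - 1 := by simp; omega
    calc (d : ℤ) * #{u ∈ hodgeBox (n + 1) d | (d : ℤ) ∣ i - ∑ k, u k}
        = ∑ c ∈ Icc 1 ((d : ℤ) - 1),
            (d : ℤ) * #{v ∈ hodgeBox n d | (d : ℤ) ∣ (i - c) - ∑ k, v k} := by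
          simp only [card_hodgeBox_succ_filter (fun s => (d : ℤ) ∣ i - s), sub_add_eq_sub_sub,
            Nat.cast_sum, mul_sum]
      _ = ∑ c ∈ Icc 1 ((d : ℤ) - 1),
            ((d - 1) ^ n - (-1) ^ n + if (d : ℤ) ∣ i - c then (d : ℤ) * (-1) ^ n else 0) :=
          sum_congr rfl fun c _ => ih (i - c)
      _ = (d - 1) * ((d - 1) ^ n - (-1) ^ n) +
            #{c ∈ Icc 1 ((d : ℤ) - 1) | (d : ℤ) ∣ i - c} * ((d : ℤ) * (-1) ^ n) := by
          rw [sum_add_distrib, sum_const, nsmul_eq_mul, hIcc, sum_ite, sum_const_zero, add_zero,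
            sum_const, nsmul_eq_mul]
      _ = (d - 1) ^ (n + 1) - (-1) ^ (n + 1) +
            if (d : ℤ) ∣ i then (d : ℤ) * (-1) ^ (n + 1) else 0 := by
          rw [card_Icc_filter_dvd_sub hd' i]
          split_ifs <;> push_cast <;> ring

lemma eq_natCast_mul_iff_toNat_ediv {d m : ℤ} (hd : 0 < d) (j : ℕ) :
    m = j * d ↔ (0 ≤ m ∧ d ∣ m) ∧ (m / d).toNat = j := by
  constructor
  · rintro rfl
    exact ⟨⟨by positivity, dvd_mul_left d j⟩, by simp [Int.mul_ediv_cancel _ hd.ne']⟩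
  · rintro ⟨⟨hm, c, rfl⟩, rfl⟩
    have hc : 0 ≤ c := nonneg_of_mul_nonneg_right (by linarith) hd
    simp [Int.mul_ediv_cancel_left _ hd.ne', Int.toNat_of_nonneg hc, mul_comm]

lemma Hsum_eq_card {n d : ℕ} (hd : 0 < d) (i : ℤ) :
    Hsum n d i = #{u ∈ hodgeBox n d | ∑ k, u k ≤ i ∧ (d : ℤ) ∣ i - ∑ k, u k} := by
  have hd' : (0 : ℤ) < d := by exact_mod_cast hd
  rw [Hsum]
  split_ifs with hi
  · symm
    refine Nat.cast_eq_zero.mpr (card_eq_zero.mpr (filter_eq_empty_iff.mpr fun u hu h => ?_))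
    linarith [sum_nonneg_of_mem_hodgeBox hu, h.1]
  · rw [card_eq_sum_card_fiberwise (f := fun u => ((i - ∑ k, u k) / d).toNat)
      (t := range ((i / d).toNat + 1)), Nat.cast_sum]
    · refine sum_congr rfl fun j _ => ?_
      rw [hodge, filter_filter]
      congr 2
      refine filter_congr fun u _ => ?_
      rw [← sub_nonneg, ← eq_natCast_mul_iff_toNat_ediv hd']
      constructor <;> intro h <;> linarith
    · intro u hu
      obtain ⟨hu, hle, -⟩ := mem_filter.mp hu
      have := Int.ediv_le_ediv hd' (sub_le_self i (sum_nonneg_of_mem_hodgeBox hu))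
      simp only [coe_range, Set.mem_Iio]
      omega

lemma Hsum_reflect_eq_card {n d : ℕ} (hd : 0 < d) (i : ℤ) :
    Hsum n d (n * d - i - d) =
      #{u ∈ hodgeBox n d | i + d ≤ ∑ k, u k ∧ (d : ℤ) ∣ i - ∑ k, u k} := by
  rw [Hsum_eq_card hd,
    card_hodgeBox_filter_sum_reflect fun s => s ≤ n * d - i - d ∧ (d : ℤ) ∣ n * d - i - d - s]
  congr 2
  refine filter_congr fun u _ => and_congr (by omega) ?_
  rw [show (n * d - i - d - (n * d - ∑ k, u k) : ℤ) = (∑ k, u k - i) - d by ring,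
    dvd_sub_self_right, dvd_sub_comm]

lemma card_filter_le_add_card_filter_add_le {α : Type*} (s : Finset α) (f : α → ℤ) {d : ℤ}
    (hd : 0 < d) (i : ℤ) :
    #{x ∈ s | f x ≤ i ∧ d ∣ i - f x} + #{x ∈ s | i + d ≤ f x ∧ d ∣ i - f x} =
      #{x ∈ s | d ∣ i - f x} := by
  rw [← card_filter_add_card_filter_not (s := {x ∈ s | d ∣ i - f x}) (fun x => f x ≤ i),
    filter_filter, filter_filter]
  congr 2 <;> refine filter_congr fun x _ => ?_
  · exact and_comm
  · refine ⟨fun h => ⟨h.2, by omega⟩, fun h => ⟨?_, h.1⟩⟩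
    have := Int.le_of_dvd (by omega) (dvd_sub_comm.mp h.1)
    omega

theorem Hsum_symm_general (n d : ℕ) (hd : 2 ≤ d) (i : ℤ) (hi : ¬ (d : ℤ) ∣ i) :
    Hsum n d i + Hsum n d ((n : ℤ) * d - i - d)
      = (((d : ℤ) - 1) ^ n - (-1) ^ n) / d := by
  have hd0 : 0 < d := by omega
  have hcount := mul_card_hodgeBox_filter_dvd_sub hd0 n i
  rw [if_neg hi, add_zero] at hcount
  rw [Hsum_eq_card hd0, Hsum_reflect_eq_card hd0, ← Nat.cast_add,
    card_filter_le_add_card_filter_add_le _ _ (by omega), ← hcount,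
    Int.mul_ediv_cancel_left _ (by omega)]

/-- Symmetry of arithmetic Hodge sums:
`H_i + H_{nd−i−d} = ((d−1)^n − (−1)^n)/d` for `0 ≤ i ≤ nd` with `d ∤ i`. -/
theorem Hsum_symm (n d : ℕ) (hn : 1 ≤ n) (hd : 2 ≤ d) (i : ℤ)
    (hi0 : 0 ≤ i) (hi1 : i ≤ (n : ℤ) * d) (hi : ¬ (d : ℤ) ∣ i) :
    Hsum n d i + Hsum n d ((n : ℤ) * d - i - d)
      = (((d : ℤ) - 1) ^ n - (-1) ^ n) / d :=
  Hsum_symm_general n d hd i hi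
end

section
/- Let n ≥ 1, d ≥ 2 be integers and p a prime with gcd(p,d) = 1. For every integer i with 0 ≤ i ≤ nd, the following identity holds: Σ_{j=0}^{i} h_{j,1} = Σ_{j=0}^{i} ( ⌈(p−1)j/d⌉ + ⌈(j−i)/d⌉ − ⌈(pj−i)/d⌉ ) · h_j, where ⌈·⌉ denotes the ceiling of a rational number. -/
open Finset

theorem Int.modEq_mul_left_iff_of_isCoprime {a b c d : ℤ} (hcop : IsCoprime d c) :
    c * a ≡ c * b [ZMOD d] ↔ a ≡ b [ZMOD d] := by
  simp only [Int.modEq_iff_dvd, ← mul_sub]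
  exact ⟨hcop.dvd_of_dvd_mul_left, (Dvd.dvd.mul_left · c)⟩

theorem Int.le_sub_of_modEq_sub_of_lt {a b s d : ℤ} (h : a ≡ b - s [ZMOD d]) (hs : s ≤ d)
    (hab : a < b) : a ≤ b - s := by
  obtain ⟨q, hq⟩ := Int.modEq_iff_dvd.mp h
  rcases le_or_gt d 0 with hd | hd
  · linarith
  · have hq0 : 0 ≤ q := by
      by_contra! hq0
      nlinarith [show q ≤ -1 by omega]
    nlinarith

theorem Int.le_sub_and_modEq_iff {a b s c d : ℤ} (hs : 0 < s) (hsd : s ≤ d)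
    (hcop : IsCoprime d c) (h : d ∣ c * s - (c - 1) * b) :
    a ≤ b - s ∧ a ≡ b - s [ZMOD d] ↔ a < b ∧ b ≡ c * a [ZMOD d] := by
  have hb : b ≡ c * (b - s) [ZMOD d] :=
    Int.modEq_iff_dvd.mpr <| by
      rw [show c * (b - s) - b = -(c * s - (c - 1) * b) by ring]
      exact dvd_neg.mpr h
  have hmod : a ≡ b - s [ZMOD d] ↔ b ≡ c * a [ZMOD d] := by
    rw [Int.modEq_comm, ← Int.modEq_mul_left_iff_of_isCoprime hcop]
    exact ⟨hb.trans, hb.symm.trans⟩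
  rw [← hmod]
  exact ⟨fun ⟨hle, hab⟩ => ⟨by omega, hab⟩,
    fun ⟨hlt, hab⟩ => ⟨Int.le_sub_of_modEq_sub_of_lt hab hsd hlt, hab⟩⟩

theorem Nat.card_Ioc_filter_modEq_eq_floor_sub {k i d : ℕ} (hd : 0 < d) (hki : k ≤ i) (v : ℕ) :
    (#{j ∈ Ioc k i | j ≡ v [MOD d]} : ℤ) = ⌊((i : ℚ) - v) / d⌋ - ⌊((k : ℚ) - v) / d⌋ := by
  rw [Nat.Ioc_filter_modEq_card _ _ hd, max_eq_left (sub_nonneg.mpr (Int.floor_mono (by gcongr)))]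

theorem Finset.sum_range_succ_ite_lt_and {k i : ℕ} (P : ℕ → Prop) [DecidablePred P] (c : ℤ) :
    ∑ j ∈ range (i + 1), (if k < j ∧ P j then c else 0) = #{j ∈ Ioc k i | P j} * c := by
  rw [← sum_filter, sum_const, nsmul_eq_mul]
  congr 3
  ext j
  simp only [mem_filter, mem_range, mem_Ioc]
  exact ⟨fun ⟨hji, hkj, hP⟩ => ⟨⟨hkj, by omega⟩, hP⟩, fun ⟨⟨hkj, hji⟩, hP⟩ => ⟨by omega, hkj, hP⟩⟩

theorem card_Ioc_filter_modEq_mul_sub_card {k i d : ℕ} (hd : 0 < d) (hki : k ≤ i) (p : ℕ) :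
    (#{j ∈ Ioc k i | j ≡ p * k [MOD d]} : ℤ) - #{j ∈ Ioc k i | j ≡ 1 * k [MOD d]} =
      ⌈((p : ℚ) - 1) * k / d⌉ + ⌈((k : ℚ) - i) / d⌉ - ⌈((p : ℚ) * k - i) / d⌉ := by
  have floor_eq_neg_ceil (x y : ℚ) : ⌊(x - y) / d⌋ = -⌈(y - x) / d⌉ := by
    rw [← Int.floor_neg, ← neg_div, neg_sub]
  simp only [Nat.card_Ioc_filter_modEq_eq_floor_sub hd hki, floor_eq_neg_ceil]
  push_cast
  rw [one_mul, sub_self, zero_div, Int.ceil_zero, show (p : ℚ) * k - k = (p - 1) * k by ring]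
  ring

theorem Hsum_eq_sum_ite (n : ℕ) {d : ℕ} (hd : 0 < d) {m : ℤ} {N : ℕ} (hmN : m < N) :
    Hsum n d m = ∑ k ∈ range N,
      if (k : ℤ) ≤ m ∧ (k : ℤ) ≡ m [ZMOD d] then (hodge n d k : ℤ) else 0 := by
  unfold Hsum
  split_ifs with hm
  · exact (sum_eq_zero fun k _ => if_neg fun h => by omega).symm
  have hd' : (0 : ℤ) < d := by exact_mod_cast hd
  have mem_range_iff (t : ℕ) : t ∈ range ((m / d).toNat + 1) ↔ (t : ℤ) * d ≤ m := by
    rw [mem_range, ← Int.le_ediv_iff_mul_le hd']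
    have := Int.ediv_nonneg (not_lt.mp hm) hd'.le
    omega
  have mem_filter_iff (k : ℕ) :
      k ∈ (range N).filter (fun k : ℕ => (k : ℤ) ≤ m ∧ (k : ℤ) ≡ m [ZMOD d]) ↔
      (k : ℤ) ≤ m ∧ (m - k) / d * d = m - k := by
    rw [mem_filter, mem_range, Int.modEq_iff_dvd, Int.dvd_iff_emod_eq_zero, Int.emod_def,
      sub_eq_zero, mul_comm, eq_comm]
    omega
  rw [← sum_filter]
  -- `t ↦ m - t d` matches the summation range of `Hsum` with the `k ≤ m` congruent to `m`
  refine sum_nbij' (fun t => (m - t * d).toNat) (fun k => ((m - k) / d).toNat)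
    (fun t ht => ?_) (fun k hk => ?_) (fun t ht => ?_) (fun k hk => ?_) (fun t ht => ?_)
  · rw [mem_range_iff] at ht
    rw [mem_filter_iff, Int.toNat_of_nonneg (sub_nonneg.mpr ht), sub_sub_cancel,
      Int.mul_ediv_cancel _ hd'.ne']
    exact ⟨by linarith [(by positivity : (0 : ℤ) ≤ t * d)], rfl⟩
  · rw [mem_filter_iff] at hk
    rw [mem_range_iff, Int.toNat_of_nonneg (Int.ediv_nonneg (sub_nonneg.mpr hk.1) hd'.le), hk.2]
    linarith [Int.natCast_nonneg k]
  · rw [mem_range_iff] at ht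
    rw [Int.toNat_of_nonneg (sub_nonneg.mpr ht), sub_sub_cancel, Int.mul_ediv_cancel _ hd'.ne',
      Int.toNat_natCast]
  · rw [mem_filter_iff] at hk
    rw [Int.toNat_of_nonneg (Int.ediv_nonneg (sub_nonneg.mpr hk.1) hd'.le), hk.2, sub_sub_cancel,
      Int.toNat_natCast]
  · rw [mem_range_iff] at ht
    rw [Int.toNat_of_nonneg (sub_nonneg.mpr ht)]

theorem Hsum_sub_eq_sum_ite (n : ℕ) {d c i j : ℕ} (hd : 0 < d) (hcop : Nat.Coprime d c) {s : ℤ}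
    (hs : 0 < s) (hsd : s ≤ d) (hsj : (d : ℤ) ∣ c * s - (c - 1) * j) (hji : j ≤ i) :
    Hsum n d (j - s) = ∑ k ∈ range (i + 1),
      if k < j ∧ j ≡ c * k [MOD d] then (hodge n d k : ℤ) else 0 := by
  rw [Hsum_eq_sum_ite n hd (N := i + 1) (by omega)]
  refine sum_congr rfl fun k _ => if_congr ?_ rfl rfl
  rw [Int.le_sub_and_modEq_iff hs hsd (Nat.isCoprime_iff_coprime.mpr hcop) hsj]
  norm_cast

theorem frobenius_half_sum_general (n d p : ℕ) (hd : 2 ≤ d)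
    (hpd : Nat.gcd p d = 1)
    (σ : ℕ → ℤ)
    (hσ : ∀ j : ℕ, (j : ℤ) ≤ (n : ℤ) * d →
      1 ≤ σ j ∧ σ j ≤ d ∧ (d : ℤ) ∣ (p : ℤ) * σ j - ((p : ℤ) - 1) * (j : ℤ))
    (i : ℕ) (hi : (i : ℤ) ≤ (n : ℤ) * d) :
    ∑ j ∈ Finset.range (i + 1), (Hsum n d ((j : ℤ) - σ j) - Hsum n d ((j : ℤ) - d))
      = ∑ j ∈ Finset.range (i + 1),
          (⌈(((p : ℚ) - 1) * (j : ℚ)) / (d : ℚ)⌉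
            + ⌈((j : ℚ) - (i : ℚ)) / (d : ℚ)⌉
            - ⌈((p : ℚ) * (j : ℚ) - (i : ℚ)) / (d : ℚ)⌉) * (hodge n d j : ℤ) := by
  have hd₀ : 0 < d := by omega
  have frobenius_one_eq (j : ℕ) (hj : j ∈ range (i + 1)) :
      Hsum n d ((j : ℤ) - σ j) - Hsum n d ((j : ℤ) - d) = ∑ k ∈ range (i + 1),
        ((if k < j ∧ j ≡ p * k [MOD d] then (hodge n d k : ℤ) else 0) -
          (if k < j ∧ j ≡ 1 * k [MOD d] then (hodge n d k : ℤ) else 0)) := by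
    have hji : j ≤ i := Nat.lt_succ_iff.mp (mem_range.mp hj)
    obtain ⟨hσ₁, hσd, hσj⟩ := hσ j (by omega)
    rw [sum_sub_distrib, Hsum_sub_eq_sum_ite n hd₀ (Nat.coprime_comm.mp hpd) hσ₁ hσd hσj hji,
      Hsum_sub_eq_sum_ite n hd₀ (Nat.coprime_one_right d) (by omega) le_rfl (by simp) hji]
  rw [sum_congr rfl frobenius_one_eq, sum_comm]
  refine sum_congr rfl fun k hk => ?_
  rw [sum_sub_distrib, sum_range_succ_ite_lt_and, sum_range_succ_ite_lt_and, ← sub_mul,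
    card_Ioc_filter_modEq_mul_sub_card hd₀ (Nat.lt_succ_iff.mp (mem_range.mp hk))]

/-- For `0 ≤ i ≤ nd`,
`Σ_{j=0}^{i} h_{j,1} = Σ_{j=0}^{i} (⌈(p−1)j/d⌉ + ⌈(j−i)/d⌉ − ⌈(pj−i)/d⌉)·h_j`,
where `h_{j,1} = H_{j−σ_j(0)} − H_{j−d}`, and `σ : ℕ → ℤ` assigns to each `j`
the unique `σ j ∈ {1,…,d}` with `p·σ j ≡ (p−1)·j (mod d)`. -/
theorem frobenius_half_sum (n d p : ℕ) (hn : 1 ≤ n) (hd : 2 ≤ d)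
    (hp : p.Prime) (hpd : Nat.gcd p d = 1)
    (σ : ℕ → ℤ)
    (hσ : ∀ j : ℕ, (j : ℤ) ≤ (n : ℤ) * d →
      1 ≤ σ j ∧ σ j ≤ d ∧ (d : ℤ) ∣ (p : ℤ) * σ j - ((p : ℤ) - 1) * (j : ℤ))
    (i : ℕ) (hi : (i : ℤ) ≤ (n : ℤ) * d) :
    ∑ j ∈ Finset.range (i + 1), (Hsum n d ((j : ℤ) - σ j) - Hsum n d ((j : ℤ) - d))
      = ∑ j ∈ Finset.range (i + 1),
          (⌈(((p : ℚ) - 1) * (j : ℚ)) / (d : ℚ)⌉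
            + ⌈((j : ℚ) - (i : ℚ)) / (d : ℚ)⌉
            - ⌈((p : ℚ) * (j : ℚ) - (i : ℚ)) / (d : ℚ)⌉) * (hodge n d j : ℤ) :=
  frobenius_half_sum_general n d p hd hpd σ hσ i hi
end

section
/- Let n ≥ 1 and d ≥ 1 be integers and let W := {w ∈ ℕ^n : w_1 + ⋯ + w_n ≤ d}. For every u ∈ ℕ^n, the minimum of Σ_{w∈W} s(w) over all functions s : W → ℕ satisfying Σ_{w∈W} s(w)·w = u equals ⌈(u_1 + ⋯ + u_n)/d⌉; in particular such functions s exist. -/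
/-!
Write `|u| = u_1 + ⋯ + u_n`. Every point of `W` has `|w| ≤ d`, so writing `u` as a sum of
points of `W` takes at least `⌈|u|/d⌉` of them. Conversely, peeling off a point `v ≤ u` with
`|v| = min d |u|` shows by induction on `k` that every `u` with `|u| ≤ k d` is a sum of at most
`k` points of `W`.
-/

/-- The set of lattice points of the simplex `Simp(n,d)`:
`W = {w ∈ ℕ^n : w_1 + ⋯ + w_n ≤ d}`. -/
def simplexPts (n d : ℕ) : Finset (Fin n → ℕ) :=
  (Fintype.piFinset fun _ : Fin n => Finset.range (d + 1)).filter fun w => ∑ i, w i ≤ d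

open Finset

lemma mem_simplexPts {n d : ℕ} {w : Fin n → ℕ} : w ∈ simplexPts n d ↔ ∑ i, w i ≤ d := by
  simp only [simplexPts, mem_filter, Fintype.mem_piFinset, mem_range, and_iff_right_iff_imp]
  exact fun h i => Nat.lt_succ_of_le ((single_le_sum (fun j _ => Nat.zero_le (w j))
    (mem_univ i)).trans h)

lemma Fintype.exists_le_sum_eq {ι : Type*} [Fintype ι] [DecidableEq ι] {u : ι → ℕ} :
    ∀ {m : ℕ}, m ≤ ∑ i, u i → ∃ v ≤ u, ∑ i, v i = m
  | 0, _ => ⟨0, fun i => Nat.zero_le (u i), by simp⟩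
  | m + 1, hm => by
    obtain ⟨v, hvu, hv⟩ := exists_le_sum_eq (u := u) (m := m) (by omega)
    obtain ⟨j, hj⟩ : ∃ j, v j < u j := by
      by_contra! h
      have := sum_le_sum fun i (_ : i ∈ univ) => h i
      omega
    refine ⟨v + Pi.single j 1, fun i => ?_, by simp [sum_add_distrib, hv]⟩
    rcases eq_or_ne i j with rfl | hij
    · simpa using hj
    · simpa [hij] using hvu i

lemma sum_le_mul_sum_of_sum_smul_eq {ι : Type*} [Fintype ι] {S : Finset (ι → ℕ)} {d : ℕ}
    (hS : ∀ w ∈ S, ∑ i, w i ≤ d) {s : (ι → ℕ) → ℕ} {u : ι → ℕ}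
    (hsu : ∑ w ∈ S, s w • w = u) : ∑ i, u i ≤ d * ∑ w ∈ S, s w :=
  calc ∑ i, u i = ∑ w ∈ S, s w * ∑ i, w i := by
        simp only [← hsu, Finset.sum_apply, Pi.smul_apply, smul_eq_mul, mul_sum]
        exact sum_comm
    _ ≤ ∑ w ∈ S, s w * d := sum_le_sum fun w hw => Nat.mul_le_mul_left _ (hS w hw)
    _ = d * ∑ w ∈ S, s w := by rw [← sum_mul, mul_comm]

lemma exists_sum_smul_eq_of_sum_le_mul {n d : ℕ} :
    ∀ (k : ℕ) (u : Fin n → ℕ), ∑ i, u i ≤ k * d →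
      ∃ s : (Fin n → ℕ) → ℕ, ∑ w ∈ simplexPts n d, s w • w = u ∧ ∑ w ∈ simplexPts n d, s w ≤ k
  | 0, u, hu => ⟨0, by simpa [funext_iff, eq_comm] using hu, by simp⟩
  | k + 1, u, hu => by
    obtain ⟨v, hvu, hv⟩ := Fintype.exists_le_sum_eq (min_le_right d (∑ i, u i))
    have hv_mem : v ∈ simplexPts n d := mem_simplexPts.2 (hv ▸ min_le_left _ _)
    have hrest : ∑ i, (u - v) i ≤ k * d := by
      rw [Pi.sub_def, sum_tsub_distrib univ fun i _ => hvu i, hv]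
      rw [add_mul, one_mul] at hu
      omega
    obtain ⟨s, hsu, hsk⟩ := exists_sum_smul_eq_of_sum_le_mul k (u - v) hrest
    refine ⟨s + Pi.single v 1, ?_, ?_⟩
    · rw [← tsub_add_cancel_of_le hvu, ← hsu]
      simp only [Pi.add_apply, add_smul, sum_add_distrib, add_right_inj]
      rw [sum_eq_single_of_mem v hv_mem fun w _ hw => by simp [hw]]
      simp
    · simp [sum_add_distrib, hv_mem, hsk]

theorem min_degree_of_sections_general (n d : ℕ) (hd : 1 ≤ d)
    (u : Fin n → ℕ) :
    IsLeast {m : ℤ | ∃ s : (Fin n → ℕ) → ℕ,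
        (∀ i, ∑ w ∈ simplexPts n d, s w * w i = u i) ∧
        m = ∑ w ∈ simplexPts n d, (s w : ℤ)}
      ⌈(∑ i, (u i : ℚ)) / (d : ℚ)⌉ := by
  have ceil_le_iff (k : ℕ) : ⌈(∑ i, (u i : ℚ)) / d⌉ ≤ k ↔ ∑ i, u i ≤ k * d := by
    rw [Int.ceil_le, Int.cast_natCast, div_le_iff₀ (by exact_mod_cast hd)]
    exact_mod_cast Iff.rfl
  have sum_smul_iff (s : (Fin n → ℕ) → ℕ) :
      ∑ w ∈ simplexPts n d, s w • w = u ↔ ∀ i, ∑ w ∈ simplexPts n d, s w * w i = u i := by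
    simp [funext_iff, Finset.sum_apply]
  have lower (s : (Fin n → ℕ) → ℕ) (hs : ∑ w ∈ simplexPts n d, s w • w = u) :
      ⌈(∑ i, (u i : ℚ)) / d⌉ ≤ ∑ w ∈ simplexPts n d, (s w : ℤ) := by
    rw [← Nat.cast_sum (R := ℤ), ceil_le_iff, mul_comm]
    exact sum_le_mul_sum_of_sum_smul_eq (fun w => mem_simplexPts.1) hs
  obtain ⟨k, hk⟩ := Int.eq_ofNat_of_zero_le (Int.ceil_nonneg (by positivity) :
    0 ≤ ⌈(∑ i, (u i : ℚ)) / d⌉)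
  obtain ⟨s, hsu, hsk⟩ := exists_sum_smul_eq_of_sum_le_mul k u ((ceil_le_iff k).1 hk.le)
  refine ⟨⟨s, (sum_smul_iff s).1 hsu, le_antisymm (lower s hsu) ?_⟩, ?_⟩
  · rw [hk, ← Nat.cast_sum]
    exact_mod_cast hsk
  · rintro m ⟨s, hs, rfl⟩
    exact lower s ((sum_smul_iff s).2 hs)

/-- For every `u ∈ ℕ^n`, the minimum of `Σ_{w∈W} s(w)` over all `s : W → ℕ` with
`Σ_{w∈W} s(w)·w = u` equals `⌈(u_1 + ⋯ + u_n)/d⌉`; in particular such `s` exist. -/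
theorem min_degree_of_sections (n d : ℕ) (hn : 1 ≤ n) (hd : 1 ≤ d)
    (u : Fin n → ℕ) :
    IsLeast {m : ℤ | ∃ s : (Fin n → ℕ) → ℕ,
        (∀ i, ∑ w ∈ simplexPts n d, s w * w i = u i) ∧
        m = ∑ w ∈ simplexPts n d, (s w : ℤ)}
      ⌈(∑ i, (u i : ℚ)) / (d : ℚ)⌉ :=
  min_degree_of_sections_general n d hd u
end

section
/- Let R be a commutative ring, a ≥ 1 an integer, A_0, …, A_{a−1} finite sets indexed by ℤ/a, and S := Σ_{i ∈ ℤ/a} A_i the disjoint union (so elements of S are pairs (u,i) with i ∈ ℤ/a and u ∈ A_i). Let M be an S × S matrix over R whose entry in row (u,i) and column (w,l) is zero whenever i ≠ l + 1 in ℤ/a. If there exists i_0 ∈ ℤ/a with |A_{i_0}| > |A_{i_0+1}|, then det M = 0. -/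
/-!
Every nonzero term `sign σ • ∏ w, M (σ w) w` of the Leibniz expansion needs `σ` to send the
columns indexed by `A i₀` injectively into the rows indexed by `A (i₀ + 1)`, which is
impossible when `|A (i₀ + 1)| < |A i₀|`.
-/

open Finset

theorem Matrix.det_eq_zero_of_card_lt {n R : Type*} [Fintype n] [DecidableEq n] [CommRing R]
    (M : Matrix n n R) (s t : Finset n) (hM : ∀ u w, w ∈ s → u ∉ t → M u w = 0)
    (hst : #t < #s) : M.det = 0 := by
  rw [Matrix.det_apply]
  refine sum_eq_zero fun σ _ => ?_
  obtain ⟨w, hws, hσw⟩ : ∃ w ∈ s, σ w ∉ t := by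
    by_contra! hmaps
    exact (card_le_card_of_injOn σ hmaps σ.injective.injOn).not_gt hst
  exact smul_eq_zero_of_right _ (prod_eq_zero (mem_univ w) (hM _ _ hws hσw))

/-- Let `M` be a square matrix over a commutative ring `R` indexed by the disjoint
union `S = Σ_{i ∈ ℤ/a} A_i`, whose entry in row `(u,i)` and column `(w,l)` vanishes
whenever `i ≠ l + 1` in `ℤ/a`. If `|A_{i₀}| > |A_{i₀+1}|` for some `i₀ ∈ ℤ/a`,
then `det M = 0`. -/
theorem det_eq_zero_of_card_decrease (R : Type*) [CommRing R] (a : ℕ) [NeZero a]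
    (A : ZMod a → Type*) [∀ i, Fintype (A i)] [∀ i, DecidableEq (A i)]
    (M : Matrix (Σ i : ZMod a, A i) (Σ i : ZMod a, A i) R)
    (hM : ∀ u w : Σ i : ZMod a, A i, u.1 ≠ w.1 + 1 → M u w = 0)
    (i₀ : ZMod a) (hcard : Fintype.card (A (i₀ + 1)) < Fintype.card (A i₀)) :
    M.det = 0 := by
  let fiber (i : ZMod a) : Finset (Σ i : ZMod a, A i) := ({i} : Finset _).sigma fun _ => univ
  have card_fiber (i : ZMod a) : #(fiber i) = Fintype.card (A i) := by
    simp [fiber, card_sigma]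
  refine M.det_eq_zero_of_card_lt (fiber i₀) (fiber (i₀ + 1)) (fun u w hw hu => hM u w ?_) ?_
  · simp_all [fiber]
  · rwa [card_fiber, card_fiber]
end

section
/- Let n = 2, let d ≥ 2 be an even integer, and let p be a prime with p ≡ −1 (mod d). Then for every integer i with 0 ≤ i ≤ d: h_{i,1} = 0 if i ≤ d/2, and h_{i,1} = h_{d−i} if d/2 < i ≤ d. -/
lemma hodge_eq_zero_of_lt {n d : ℕ} {m : ℤ} (hm : m < n) : hodge n d m = 0 := by
  rw [hodge, Finset.card_eq_zero, Finset.filter_eq_empty_iff]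
  intro u hu hsum
  have hle : ∑ _i : Fin n, (1 : ℤ) ≤ ∑ i, u i :=
    Finset.sum_le_sum fun i _ => (Finset.mem_Icc.1 (Fintype.mem_piFinset.1 hu i)).1
  simp only [Finset.sum_const, Finset.card_univ, Fintype.card_fin, nsmul_eq_mul, mul_one] at hle
  omega

lemma Hsum_eq_zero_of_lt {n d : ℕ} {m : ℤ} (hm : m < n) : Hsum n d m = 0 := by
  unfold Hsum
  split_ifs
  · rfl
  · refine Finset.sum_eq_zero fun j _ => ?_
    rw [hodge_eq_zero_of_lt (by nlinarith [j.cast_nonneg (α := ℤ), d.cast_nonneg (α := ℤ)]),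
      Nat.cast_zero]

lemma Hsum_eq_hodge {n d : ℕ} {m : ℤ} (h0 : 0 ≤ m) (h1 : m < d) : Hsum n d m = hodge n d m := by
  simp [Hsum, not_lt.2 h0, Int.ediv_eq_zero_of_lt h0 h1]

lemma dvd_sub_two_mul_of_dvd_add_one {d p s i : ℤ} (hpd : d ∣ p + 1)
    (hs : d ∣ p * s - (p - 1) * i) : d ∣ s - 2 * i := by
  have key : s - 2 * i = (p + 1) * (s - i) - (p * s - (p - 1) * i) := by ring
  rw [key]
  exact (hpd.mul_right _).sub hs

lemma eq_of_dvd_sub_of_abs_sub_lt {d a b : ℤ} (h : d ∣ a - b) (hab : |a - b| < d) : a = b :=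
  sub_eq_zero.1 (Int.eq_zero_of_abs_lt_dvd h hab)

theorem frobenius_numbers_neg_one_mod_general (d p : ℕ)
    (hpd : (d : ℤ) ∣ (p : ℤ) + 1) (i : ℤ)
    (hi1 : i ≤ d)
    (s : ℤ) (hs1 : 1 ≤ s) (hs2 : s ≤ d)
    (hs : (d : ℤ) ∣ (p : ℤ) * s - ((p : ℤ) - 1) * i) :
    (i ≤ (d : ℤ) / 2 → Hsum 2 d (i - s) - Hsum 2 d (i - d) = 0) ∧
    ((d : ℤ) / 2 < i → Hsum 2 d (i - s) - Hsum 2 d (i - d) = hodge 2 d ((d : ℤ) - i)) := by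
  have hdvd : (d : ℤ) ∣ s - 2 * i := dvd_sub_two_mul_of_dvd_add_one hpd hs
  constructor
  · intro hi
    have hlt : i - s < 2 := by
      rcases le_or_gt i 0 with hi0 | hi0
      · omega
      · have := eq_of_dvd_sub_of_abs_sub_lt hdvd (abs_sub_lt_iff.2 ⟨by omega, by omega⟩)
        omega
    rw [Hsum_eq_zero_of_lt hlt, Hsum_eq_zero_of_lt (by omega), sub_zero]
  · intro hi
    have hdvd' : (d : ℤ) ∣ s - (2 * i - d) := by
      rw [sub_sub_eq_add_sub, add_sub_right_comm]
      exact hdvd.add dvd_rfl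
    have hse := eq_of_dvd_sub_of_abs_sub_lt hdvd' (abs_sub_lt_iff.2 ⟨by omega, by omega⟩)
    rw [show i - s = d - i by omega, Hsum_eq_hodge (by omega) (by omega),
      Hsum_eq_zero_of_lt (by omega), sub_zero]

/-- For `n = 2`, `d` even, and `p ≡ −1 (mod d)`: for `0 ≤ i ≤ d`, the Frobenius
number `h_{i,1} = H_{i−σ_i(0)} − H_{i−d}` equals `0` if `i ≤ d/2`, and equals
`h_{d−i}` if `d/2 < i ≤ d`.  Here `s` plays the role of `σ_i(0)`, the unique
element of `{1,…,d}` with `p·s ≡ (p−1)·i (mod d)`. -/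
theorem frobenius_numbers_neg_one_mod (d p : ℕ) (hd : 2 ≤ d) (hdeven : 2 ∣ d)
    (hp : p.Prime) (hpd : (d : ℤ) ∣ (p : ℤ) + 1) (i : ℤ)
    (hi0 : 0 ≤ i) (hi1 : i ≤ d)
    (s : ℤ) (hs1 : 1 ≤ s) (hs2 : s ≤ d)
    (hs : (d : ℤ) ∣ (p : ℤ) * s - ((p : ℤ) - 1) * i) :
    (i ≤ (d : ℤ) / 2 → Hsum 2 d (i - s) - Hsum 2 d (i - d) = 0) ∧
    ((d : ℤ) / 2 < i → Hsum 2 d (i - s) - Hsum 2 d (i - d) = hodge 2 d ((d : ℤ) - i)) :=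
  frobenius_numbers_neg_one_mod_general d p hpd i hi1 s hs1 hs2 hs
end
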